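/- Let H_i, H_j : ℝ^d × ℝ → ℝ be C² with everywhere positive definite Hessian and superlinear, and let A : ℝ^d → ℝ be C² with everywhere positive definite Hessian and satisfy A(p') ≥ max(min_p H_i(p',p), min_p H_j(p',p)) for all p'. For λ ≥ min_p H_i(p',p) let π_i^+(p',λ) be the unique p ≥ argmin H_i(p',·) with H_i(p',p) = λ, and π_j^-(p',λ) the unique p ≤ argmin H_j(p',·) with H_j(p',p) = λ. For Z = (z', z_i, z_j) ∈ ℝ^d × [0,+∞) × (−∞,0], set 𝔊(Z) = sup { p'·z' + p_i z_i + p_j z_j − λ : H_i(p',p_i) = H_j(p',p_j) = λ ≥ A(p') }. Suppose (p',p_i,p_j,λ) and (q',q_i,q_j,μ) both lie in the constraint set (H_i(p',p_i) = H_j(p',p_j) = λ ≥ A(p') and H_i(q',q_i) = H_j(q',q_j) = μ ≥ A(q')), realize 𝔊(Z) (i.e. 𝔊(Z) = p'·z' + p_i z_i + p_j z_j − λ = q'·z' + q_i z_i + q_j z_j − μ), and admit multipliers α = (α_i,α_j,α_0) and β = (β_i,β_j,β_0), nonnegative summing to 1, with z_i = α_i ∂_p H_i(p',p_i), z_j =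 α_j ∂_p H_j(p',p_j), z' = α_i ∇_{p'}H_i(p',p_i) + α_j ∇_{p'}H_j(p',p_j) + α_0 ∇A(p'), and the analogous equations for (β, q', q_i, q_j). Then: λ = μ; p' = q'; either p_i = q_i = π_i^+(p',λ) or α_i = β_i = 0 = z_i; either p_j = q_j = π_j^-(p',λ) or α_j = β_j = 0 = z_j; and moreover, setting p̂_i = π_i^+(p',λ) and p̂_j = π_j^-(p',λ), one has 𝔊(Z) = p'·z' + p̂_i z_i + p̂_j z_j − λ together with z_i = α_i ∂_p H_i(p',p̂_i), z_j = α_j ∂_p H_j(p',p̂_j), z' = α_i ∇_{p'}H_i(p',p̂_i) + α_j ∇_{p'}H_j(p',p̂_j) + α_0 ∇A(p'). -/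

import Mathlib

open scoped RealInnerProductSpace

open Set

/-!
Both maximisers have the same value `G`. A point satisfying the relaxed constraints
`H_i ≤ ν`, `H_j ≤ ν`, `A ≤ ν` can be moved onto the feasible set by replacing `p_i` with
`π_i^+(p', ν) ≥ p_i` and `p_j` with `π_j^-(p', ν) ≤ p_j`, which does not decrease the value since
`z_i ≥ 0 ≥ z_j`; so relaxed points have value at most `G` too. By convexity the midpoint of the
two maximisers is relaxed-feasible at the level `ν = max (H_i, H_j, A) ≤ (λ + μ) / 2`, and its
value is `G + (λ + μ) / 2 - ν`. Hence one of the three constraints is tight at the midpoint, and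
strict convexity of that constraint gives `p' = q'` and `λ = μ`.

The same replacement at `p'` shows `p_i z_i = π_i^+ z_i` and `p_j z_j = π_j^- z_j`. If `z_i = 0`
while a multiplier of `H_i` is nonzero, then `∂_p H_i` vanishes, so `λ` is the minimum of
`H_i (p', ·)` and every candidate equals its argmin `π_i^+(p', λ)`.
-/

section SecondDerivative

variable {E : Type*} [NormedAddCommGroup E] [NormedSpace ℝ E]

theorem iteratedDeriv_two_comp_add_smul {f : E → ℝ} (hf : ContDiff ℝ 2 f) (x v : E) (t : ℝ) :
    iteratedDeriv 2 (fun t : ℝ => f (x + t • v)) t = iteratedFDeriv ℝ 2 f (x + t • v) ![v, v] := by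
  have hline : (fun t : ℝ => f (x + t • v))
      = (fun y => f (x + y)) ∘ (ContinuousLinearMap.id ℝ ℝ).smulRight v := rfl
  have hfx : ContDiff ℝ 2 (fun y => f (x + y)) := hf.comp (contDiff_const.add contDiff_id)
  rw [hline, iteratedDeriv_eq_iteratedFDeriv,
    ContinuousLinearMap.iteratedFDeriv_comp_right _ hfx _ le_rfl, iteratedFDeriv_comp_add_left]
  simp only [ContinuousMultilinearMap.compContinuousLinearMap_apply,
    ContinuousLinearMap.smulRight_apply, ContinuousLinearMap.id_apply, one_smul]
  congr 1
  ext i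
  fin_cases i <;> rfl

theorem strictConvexOn_univ_of_iteratedFDeriv_two_pos {f : E → ℝ} (hf : ContDiff ℝ 2 f)
    (hpos : ∀ x v, v ≠ 0 → 0 < iteratedFDeriv ℝ 2 f x ![v, v]) :
    StrictConvexOn ℝ univ f := by
  refine ⟨convex_univ, fun x _ y _ hxy a b ha hb hab => ?_⟩
  have hline : StrictConvexOn ℝ univ (fun t : ℝ => f (x + t • (y - x))) :=
    strictConvexOn_univ_of_deriv2_pos (by fun_prop) fun t => by
      rw [← iteratedDeriv_eq_iterate, iteratedDeriv_two_comp_add_smul hf]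
      exact hpos _ _ (sub_ne_zero.2 hxy.symm)
  have key := hline.2 (mem_univ 0) (mem_univ 1) zero_ne_one ha hb hab
  obtain rfl : a = 1 - b := by linarith
  convert key using 2 <;> simp; module

end SecondDerivative

theorem StrictConvexOn.comp_prodMk {F : Type*} [AddCommGroup F] [Module ℝ F] {H : F × ℝ → ℝ}
    (hH : StrictConvexOn ℝ univ H) (x : F) : StrictConvexOn ℝ univ (fun p => H (x, p)) := by
  refine ⟨convex_univ, fun a _ b _ hab s t hs ht hst => ?_⟩
  simpa [Convex.combo_self hst] using
    hH.2 (mem_univ (x, a)) (mem_univ (x, b)) (by simpa using hab) hs ht hst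

theorem midpoint_prodMk {F G : Type*} [AddCommGroup F] [Module ℝ F] [AddCommGroup G] [Module ℝ G]
    (a b : F) (s t : G) :
    midpoint ℝ (a, s) (b, t) = (midpoint ℝ a b, midpoint ℝ s t) := by
  simp [midpoint_eq_smul_add]

theorem StrictConvexOn.eq_and_eq_of_le_midpoint {E : Type*} [AddCommGroup E] [Module ℝ E]
    {f : E → ℝ} (hf : StrictConvexOn ℝ univ f) {x y : E} {a b : ℝ} (hx : f x ≤ a) (hy : f y ≤ b)
    (h : (a + b) / 2 ≤ f (midpoint ℝ x y)) : x = y ∧ a = b := by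
  obtain rfl : x = y := by
    by_contra hxy
    have := hf.2 (mem_univ x) (mem_univ y) hxy (by norm_num : (0:ℝ) < 2⁻¹)
      (by norm_num : (0:ℝ) < 2⁻¹) (by norm_num)
    rw [← smul_add, ← invOf_eq_inv, ← midpoint_eq_smul_add, smul_eq_mul, smul_eq_mul,
      invOf_eq_inv] at this
    linarith
  rw [midpoint_self] at h
  exact ⟨rfl, by linarith⟩

theorem StrictConvexOn.le_of_apply_le_of_min_le {h : ℝ → ℝ} (hh : StrictConvexOn ℝ univ h)
    {ρ π r : ℝ} (hρ : ∀ q, h ρ ≤ h q) (hρπ : ρ ≤ π) (hr : h r ≤ h π) : r ≤ π := by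
  by_contra! hπr
  have hmid : h ((π + r) / 2) < h π :=
    (hh.lt_on_openSegment trivial trivial hπr.ne
      (Ioo_subset_openSegment ⟨by linarith, by linarith⟩)).trans_le (max_le le_rfl hr)
  have hπ : h π ≤ h ((π + r) / 2) :=
    (hh.convexOn.le_on_segment trivial trivial
      (Icc_subset_segment ⟨hρπ, by linarith⟩)).trans (max_le (hρ _) le_rfl)
  exact hmid.not_ge hπ

theorem StrictConvexOn.le_of_apply_le_of_le_min {h : ℝ → ℝ} (hh : StrictConvexOn ℝ univ h)
    {ρ π r : ℝ} (hρ : ∀ q, h ρ ≤ h q) (hπρ : π ≤ ρ) (hr : h r ≤ h π) : π ≤ r := by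
  by_contra! hrπ
  have hmid : h ((r + π) / 2) < h π :=
    (hh.lt_on_openSegment trivial trivial hrπ.ne
      (Ioo_subset_openSegment ⟨by linarith, by linarith⟩)).trans_le (max_le hr le_rfl)
  have hπ : h π ≤ h ((r + π) / 2) :=
    (hh.convexOn.le_on_segment trivial trivial
      (Icc_subset_segment ⟨by linarith, hπρ⟩)).trans (max_le le_rfl (hρ _))
  exact hmid.not_ge hπ

theorem ConvexOn.le_of_deriv_eq_zero {h : ℝ → ℝ} (hh : ConvexOn ℝ univ h) {p : ℝ}
    (hd : DifferentiableAt ℝ h p) (hp : deriv h p = 0) (q : ℝ) : h p ≤ h q := by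
  refine hh.isMinOn_of_rightDeriv_eq_zero (by simp) ?_ (mem_univ q)
  rw [hd.hasDerivAt.hasDerivWithinAt.derivWithin (uniqueDiffWithinAt_Ioi p), hp]

theorem eq_and_eq_of_deriv_eq_zero {h : ℝ → ℝ} (hh : ConvexOn ℝ univ h) (hd : Differentiable ℝ h)
    {c π p q : ℝ} (hπ : ∀ x, (∀ y, h x ≤ h y) → h x = c → x = π) (hp : h p = c) (hq : h q = c)
    (hp0 : deriv h p = 0) : p = π ∧ q = π :=
  have hmin := hh.le_of_deriv_eq_zero (hd p) hp0
  ⟨hπ p hmin hp, hπ q (fun y => hq.trans hp.symm |>.trans_le (hmin y)) hq⟩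

theorem eq_or_eq_zero_of_mul_deriv {h : ℝ → ℝ} (hh : ConvexOn ℝ univ h) (hd : Differentiable ℝ h)
    {c π p q z a b : ℝ} (hπ : ∀ x, (∀ y, h x ≤ h y) → h x = c → x = π) (hp : h p = c)
    (hq : h q = c) (hpz : p * z = π * z) (hqz : q * z = π * z) (hza : z = a * deriv h p)
    (hzb : z = b * deriv h q) : (p = q ∧ p = π) ∨ (a = 0 ∧ b = 0 ∧ z = 0) := by
  rcases eq_or_ne z 0 with rfl | hz
  · rcases eq_or_ne a 0 with rfl | ha
    · rcases eq_or_ne b 0 with rfl | hb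
      · exact Or.inr ⟨rfl, rfl, rfl⟩
      · obtain ⟨hqπ, hpπ⟩ := eq_and_eq_of_deriv_eq_zero hh hd hπ hq hp
          ((mul_eq_zero.1 hzb.symm).resolve_left hb)
        exact Or.inl ⟨hpπ.trans hqπ.symm, hpπ⟩
    · obtain ⟨hpπ, hqπ⟩ := eq_and_eq_of_deriv_eq_zero hh hd hπ hp hq
        ((mul_eq_zero.1 hza.symm).resolve_left ha)
      exact Or.inl ⟨hpπ.trans hqπ.symm, hpπ⟩
  · have hpπ := mul_right_cancel₀ hz hpz
    exact Or.inl ⟨hpπ.trans (mul_right_cancel₀ hz hqz).symm, hpπ⟩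

theorem smul_eq_smul_of_eq_or_eq_zero {M : Type*} [AddCommGroup M] [Module ℝ M] (f : ℝ → M)
    {π p q z a b : ℝ} (h : (p = q ∧ p = π) ∨ (a = 0 ∧ b = 0 ∧ z = 0)) : a • f p = a • f π := by
  rcases h with ⟨-, rfl⟩ | ⟨rfl, -, -⟩ <;> simp

section Maximisers

variable {E : Type*} [NormedAddCommGroup E] [InnerProductSpace ℝ E]
  {Hi Hj : E × ℝ → ℝ} {A : E → ℝ} {πi πj : E → ℝ → ℝ} {z' : E} {zi zj G : ℝ}

/-- The set whose supremum is `𝔊(Z)`. -/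
def feasibleValues (Hi Hj : E × ℝ → ℝ) (A : E → ℝ) (z' : E) (zi zj : ℝ) : Set ℝ :=
  {v | ∃ (r' : E) (ri rj nu : ℝ), Hi (r', ri) = nu ∧ Hj (r', rj) = nu ∧ A r' ≤ nu ∧
    v = ⟪r', z'⟫ + ri * zi + rj * zj - nu}

theorem le_upperInverse_of_le {H : E × ℝ → ℝ} (hH : StrictConvexOn ℝ univ H) {ρ : E → ℝ}
    {π : E → ℝ → ℝ} (hρ : ∀ r', ∀ q, H (r', ρ r') ≤ H (r', q))
    (hπ : ∀ r' ν, H (r', ρ r') ≤ ν → ρ r' ≤ π r' ν ∧ H (r', π r' ν) = ν)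
    {r' : E} {r ν : ℝ} (hr : H (r', r) ≤ ν) : r ≤ π r' ν ∧ H (r', π r' ν) = ν :=
  have ⟨hρπ, hπν⟩ := hπ r' ν ((hρ r' r).trans hr)
  ⟨(hH.comp_prodMk r').le_of_apply_le_of_min_le (hρ r') hρπ (hr.trans hπν.ge), hπν⟩

theorem lowerInverse_le_of_le {H : E × ℝ → ℝ} (hH : StrictConvexOn ℝ univ H) {ρ : E → ℝ}
    {π : E → ℝ → ℝ} (hρ : ∀ r', ∀ q, H (r', ρ r') ≤ H (r', q))
    (hπ : ∀ r' ν, H (r', ρ r') ≤ ν → π r' ν ≤ ρ r' ∧ H (r', π r' ν) = ν)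
    {r' : E} {r ν : ℝ} (hr : H (r', r) ≤ ν) : π r' ν ≤ r ∧ H (r', π r' ν) = ν :=
  have ⟨hπρ, hπν⟩ := hπ r' ν ((hρ r' r).trans hr)
  ⟨(hH.comp_prodMk r').le_of_apply_le_of_le_min (hρ r') hπρ (hr.trans hπν.ge), hπν⟩

theorem value_le_of_sublevel
    (hπi : ∀ r' r ν, Hi (r', r) ≤ ν → r ≤ πi r' ν ∧ Hi (r', πi r' ν) = ν)
    (hπj : ∀ r' r ν, Hj (r', r) ≤ ν → πj r' ν ≤ r ∧ Hj (r', πj r' ν) = ν)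
    (hzi : 0 ≤ zi) (hzj : zj ≤ 0) (hG : G ∈ upperBounds (feasibleValues Hi Hj A z' zi zj))
    {r' : E} {ri rj ν : ℝ} (hi : Hi (r', ri) ≤ ν) (hj : Hj (r', rj) ≤ ν)
    (hA : A r' ≤ ν) : ⟪r', z'⟫ + ri * zi + rj * zj - ν ≤ G := by
  obtain ⟨hri, hπiν⟩ := hπi r' ri ν hi
  obtain ⟨hrj, hπjν⟩ := hπj r' rj ν hj
  calc ⟪r', z'⟫ + ri * zi + rj * zj - ν ≤ ⟪r', z'⟫ + πi r' ν * zi + πj r' ν * zj - ν := by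
        gcongr ⟪r', z'⟫ + ?_ + ?_ - ν
        · exact mul_le_mul_of_nonneg_right hri hzi
        · exact mul_le_mul_of_nonpos_right hrj hzj
    _ ≤ G := hG ⟨r', _, _, ν, hπiν, hπjν, hA, rfl⟩

theorem mul_eq_inverse_mul_of_value_eq
    (hπi : ∀ r' r ν, Hi (r', r) ≤ ν → r ≤ πi r' ν ∧ Hi (r', πi r' ν) = ν)
    (hπj : ∀ r' r ν, Hj (r', r) ≤ ν → πj r' ν ≤ r ∧ Hj (r', πj r' ν) = ν)
    (hzi : 0 ≤ zi) (hzj : zj ≤ 0) (hG : G ∈ upperBounds (feasibleValues Hi Hj A z' zi zj))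
    {p' : E} {pi pj lam : ℝ}
    (hP : Hi (p', pi) = lam ∧ Hj (p', pj) = lam ∧ A p' ≤ lam)
    (hval : ⟪p', z'⟫ + pi * zi + pj * zj - lam = G) :
    pi * zi = πi p' lam * zi ∧ pj * zj = πj p' lam * zj := by
  obtain ⟨hpi, hπiν⟩ := hπi p' pi lam hP.1.le
  obtain ⟨hpj, hπjν⟩ := hπj p' pj lam hP.2.1.le
  have hbranch_le := hG ⟨p', _, _, lam, hπiν, hπjν, hP.2.2, rfl⟩
  have := mul_le_mul_of_nonneg_right hpi hzi
  have := mul_le_mul_of_nonpos_right hpj hzj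
  constructor <;> linarith

theorem level_eq_and_eq_of_value_eq (hsci : StrictConvexOn ℝ univ Hi)
    (hscj : StrictConvexOn ℝ univ Hj) (hscA : StrictConvexOn ℝ univ A)
    (hG : ∀ (r' : E) (ri rj ν : ℝ), Hi (r', ri) ≤ ν → Hj (r', rj) ≤ ν → A r' ≤ ν →
      ⟪r', z'⟫ + ri * zi + rj * zj - ν ≤ G)
    {p' q' : E} {pi pj qi qj lam mu : ℝ}
    (hP : Hi (p', pi) = lam ∧ Hj (p', pj) = lam ∧ A p' ≤ lam)
    (hQ : Hi (q', qi) = mu ∧ Hj (q', qj) = mu ∧ A q' ≤ mu)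
    (hvalP : ⟪p', z'⟫ + pi * zi + pj * zj - lam = G)
    (hvalQ : ⟪q', z'⟫ + qi * zi + qj * zj - mu = G) : lam = mu ∧ p' = q' := by
  set ν := max (max (Hi (midpoint ℝ (p', pi) (q', qi))) (Hj (midpoint ℝ (p', pj) (q', qj))))
    (A (midpoint ℝ p' q'))
  have hν : (lam + mu) / 2 ≤ ν := by
    have hmid := hG (midpoint ℝ p' q') (midpoint ℝ pi qi) (midpoint ℝ pj qj) ν
      (by rw [← midpoint_prodMk]; exact (le_max_left _ _).trans (le_max_left _ _))
      (by rw [← midpoint_prodMk]; exact (le_max_right _ _).trans (le_max_left _ _))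
      (le_max_right _ _)
    simp only [midpoint_eq_smul_add, inner_smul_left, inner_add_left, smul_eq_mul,
      invOf_eq_inv, RCLike.conj_to_real] at hmid
    linarith
  rcases le_max_iff.1 hν with hij | hA
  · rcases le_max_iff.1 hij with hi | hj
    · obtain ⟨hpq, hlm⟩ := hsci.eq_and_eq_of_le_midpoint hP.1.le hQ.1.le hi
      exact ⟨hlm, congrArg Prod.fst hpq⟩
    · obtain ⟨hpq, hlm⟩ := hscj.eq_and_eq_of_le_midpoint hP.2.1.le hQ.2.1.le hj
      exact ⟨hlm, congrArg Prod.fst hpq⟩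
  · exact (hscA.eq_and_eq_of_le_midpoint hP.2.2 hQ.2.2 hA).symm

end Maximisers

theorem vertex_maximiser_unique_ij_general (d : ℕ)
    (Hi Hj : EuclideanSpace ℝ (Fin d) × ℝ → ℝ)
    (hC2i : ContDiff ℝ 2 Hi) (hC2j : ContDiff ℝ 2 Hj)
    (hposi : ∀ P v : EuclideanSpace ℝ (Fin d) × ℝ, v ≠ 0 →
      0 < iteratedFDeriv ℝ 2 Hi P ![v, v])
    (hposj : ∀ P v : EuclideanSpace ℝ (Fin d) × ℝ, v ≠ 0 →
      0 < iteratedFDeriv ℝ 2 Hj P ![v, v])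
    (A : EuclideanSpace ℝ (Fin d) → ℝ)
    (hAC2 : ContDiff ℝ 2 A)
    (hApos : ∀ p' v : EuclideanSpace ℝ (Fin d), v ≠ 0 →
      0 < iteratedFDeriv ℝ 2 A p' ![v, v])
    -- argmins and partial inverses
    (ρi ρj : EuclideanSpace ℝ (Fin d) → ℝ)
    (hρi : ∀ p', (∀ q : ℝ, Hi (p', ρi p') ≤ Hi (p', q)) ∧
      ∀ p : ℝ, (∀ q : ℝ, Hi (p', p) ≤ Hi (p', q)) → p = ρi p')
    (hρj : ∀ p', (∀ q : ℝ, Hj (p', ρj p') ≤ Hj (p', q)) ∧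
      ∀ p : ℝ, (∀ q : ℝ, Hj (p', p) ≤ Hj (p', q)) → p = ρj p')
    (πip : EuclideanSpace ℝ (Fin d) → ℝ → ℝ)
    (hπip : ∀ (p' : EuclideanSpace ℝ (Fin d)) (lam : ℝ), Hi (p', ρi p') ≤ lam →
      ρi p' ≤ πip p' lam ∧ Hi (p', πip p' lam) = lam ∧
      ∀ p : ℝ, ρi p' ≤ p → Hi (p', p) = lam → p = πip p' lam)
    (πjm : EuclideanSpace ℝ (Fin d) → ℝ → ℝ)
    (hπjm : ∀ (p' : EuclideanSpace ℝ (Fin d)) (lam : ℝ), Hj (p', ρj p') ≤ lam →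
      πjm p' lam ≤ ρj p' ∧ Hj (p', πjm p' lam) = lam ∧
      ∀ p : ℝ, p ≤ ρj p' → Hj (p', p) = lam → p = πjm p' lam)
    -- the two maximisers
    (z' : EuclideanSpace ℝ (Fin d)) (zi zj : ℝ) (hzi : 0 ≤ zi) (hzj : zj ≤ 0)
    (p' q' : EuclideanSpace ℝ (Fin d)) (pi pj qi qj lam mu : ℝ)
    (hfeasP : Hi (p', pi) = lam ∧ Hj (p', pj) = lam ∧ A p' ≤ lam)
    (hfeasQ : Hi (q', qi) = mu ∧ Hj (q', qj) = mu ∧ A q' ≤ mu)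
    (hvals : ⟪p', z'⟫ + pi * zi + pj * zj - lam = ⟪q', z'⟫ + qi * zi + qj * zj - mu)
    (hmax : IsGreatest {v : ℝ | ∃ (r' : EuclideanSpace ℝ (Fin d)) (ri rj nu : ℝ),
        Hi (r', ri) = nu ∧ Hj (r', rj) = nu ∧ A r' ≤ nu ∧
        v = ⟪r', z'⟫ + ri * zi + rj * zj - nu}
      (⟪p', z'⟫ + pi * zi + pj * zj - lam))
    (ai aj a0 : ℝ)
    (heqPi : zi = ai * deriv (fun p : ℝ => Hi (p', p)) pi)
    (heqPj : zj = aj * deriv (fun p : ℝ => Hj (p', p)) pj)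
    (heqP' : z' = ai • gradient (fun r : EuclideanSpace ℝ (Fin d) => Hi (r, pi)) p'
        + aj • gradient (fun r : EuclideanSpace ℝ (Fin d) => Hj (r, pj)) p'
        + a0 • gradient A p')
    (bi bj : ℝ)
    (heqQi : zi = bi * deriv (fun p : ℝ => Hi (q', p)) qi)
    (heqQj : zj = bj * deriv (fun p : ℝ => Hj (q', p)) qj) :
    lam = mu ∧ p' = q' ∧
    ((pi = qi ∧ pi = πip p' lam) ∨ (ai = 0 ∧ bi = 0 ∧ zi = 0)) ∧
    ((pj = qj ∧ pj = πjm p' lam) ∨ (aj = 0 ∧ bj = 0 ∧ zj = 0)) ∧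
    (⟪p', z'⟫ + pi * zi + pj * zj - lam
      = ⟪p', z'⟫ + πip p' lam * zi + πjm p' lam * zj - lam) ∧
    zi = ai * deriv (fun p : ℝ => Hi (p', p)) (πip p' lam) ∧
    zj = aj * deriv (fun p : ℝ => Hj (p', p)) (πjm p' lam) ∧
    z' = ai • gradient (fun r : EuclideanSpace ℝ (Fin d) => Hi (r, πip p' lam)) p'
        + aj • gradient (fun r : EuclideanSpace ℝ (Fin d) => Hj (r, πjm p' lam)) p'
        + a0 • gradient A p' := by
  have sci := strictConvexOn_univ_of_iteratedFDeriv_two_pos hC2i hposi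
  have scj := strictConvexOn_univ_of_iteratedFDeriv_two_pos hC2j hposj
  have hπi := fun r' r ν (h : Hi (r', r) ≤ ν) => le_upperInverse_of_le sci (fun r' => (hρi r').1)
    (fun r' ν h => (hπip r' ν h).imp_right And.left) h
  have hπj := fun r' r ν (h : Hj (r', r) ≤ ν) => lowerInverse_le_of_le scj (fun r' => (hρj r').1)
    (fun r' ν h => (hπjm r' ν h).imp_right And.left) h
  obtain ⟨rfl, rfl⟩ := level_eq_and_eq_of_value_eq sci scj
    (strictConvexOn_univ_of_iteratedFDeriv_two_pos hAC2 hApos)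
    (fun _ _ _ _ => value_le_of_sublevel hπi hπj hzi hzj hmax.2) hfeasP hfeasQ rfl hvals.symm
  obtain ⟨hpi, hpj⟩ := mul_eq_inverse_mul_of_value_eq hπi hπj hzi hzj hmax.2 hfeasP rfl
  obtain ⟨hqi, hqj⟩ := mul_eq_inverse_mul_of_value_eq hπi hπj hzi hzj hmax.2 hfeasQ hvals.symm
  obtain ⟨-, -, hπi_unique⟩ := hπip p' lam (((hρi p').1 pi).trans hfeasP.1.le)
  obtain ⟨-, -, hπj_unique⟩ := hπjm p' lam (((hρj p').1 pj).trans hfeasP.2.1.le)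
  have hbi := eq_or_eq_zero_of_mul_deriv (sci.comp_prodMk p').convexOn
    ((hC2i.differentiable two_ne_zero).comp (by fun_prop))
    (fun x hx => hπi_unique x ((hρi p').2 x hx).ge) hfeasP.1 hfeasQ.1 hpi hqi heqPi heqQi
  have hbj := eq_or_eq_zero_of_mul_deriv (scj.comp_prodMk p').convexOn
    ((hC2j.differentiable two_ne_zero).comp (by fun_prop))
    (fun x hx => hπj_unique x ((hρj p').2 x hx).le) hfeasP.2.1 hfeasQ.2.1 hpj hqj heqPj heqQj
  refine ⟨rfl, rfl, hbi, hbj, by linarith, ?_, ?_, ?_⟩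
  · rw [heqPi]
    exact smul_eq_smul_of_eq_or_eq_zero _ hbi
  · rw [heqPj]
    exact smul_eq_smul_of_eq_or_eq_zero _ hbj
  · rw [heqP', smul_eq_smul_of_eq_or_eq_zero (fun p => gradient (fun r => Hi (r, p)) p') hbi,
      smul_eq_smul_of_eq_or_eq_zero (fun p => gradient (fun r => Hj (r, p)) p') hbj]

/-- Uniqueness of the maximiser, ij-version: with smooth uniformly convex
superlinear `Hi, Hj`, a smooth uniformly convex limiter `A ≥ max(min Hi, min Hj)`, partial
inverses `πip p' λ` (the unique `p ≥ argmin Hi (p', ·)` with `Hi (p', p) = λ`) and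
`πjm p' λ` (the unique `p ≤ argmin Hj (p', ·)` with `Hj (p', p) = λ`), if two feasible
points `(p', p_i, p_j, λ)` and `(q', q_i, q_j, μ)` both realize the supremum `𝔊 Z` for
`Z = (z', z_i, z_j)`, `z_i ≥ 0 ≥ z_j`, and both admit simplex multipliers, then `λ = μ`,
`p' = q'`, `p_i = q_i = πip p' λ` unless `α_i = β_i = 0 = z_i`, `p_j = q_j = πjm p' λ`
unless `α_j = β_j = 0 = z_j`, and the supremum is also realized at
`(p', πip p' λ, πjm p' λ, λ)` with the same multipliers. -/
theorem vertex_maximiser_unique_ij (d : ℕ)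
    (Hi Hj : EuclideanSpace ℝ (Fin d) × ℝ → ℝ)
    (hC2i : ContDiff ℝ 2 Hi) (hC2j : ContDiff ℝ 2 Hj)
    (hposi : ∀ P v : EuclideanSpace ℝ (Fin d) × ℝ, v ≠ 0 →
      0 < iteratedFDeriv ℝ 2 Hi P ![v, v])
    (hposj : ∀ P v : EuclideanSpace ℝ (Fin d) × ℝ, v ≠ 0 →
      0 < iteratedFDeriv ℝ 2 Hj P ![v, v])
    (hsupi : ∀ M : ℝ, ∃ R : ℝ, ∀ P : EuclideanSpace ℝ (Fin d) × ℝ, R ≤ ‖P‖ → M * ‖P‖ ≤ Hi P)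
    (hsupj : ∀ M : ℝ, ∃ R : ℝ, ∀ P : EuclideanSpace ℝ (Fin d) × ℝ, R ≤ ‖P‖ → M * ‖P‖ ≤ Hj P)
    (A : EuclideanSpace ℝ (Fin d) → ℝ)
    (hAC2 : ContDiff ℝ 2 A)
    (hApos : ∀ p' v : EuclideanSpace ℝ (Fin d), v ≠ 0 →
      0 < iteratedFDeriv ℝ 2 A p' ![v, v])
    (hAbound : ∀ p' : EuclideanSpace ℝ (Fin d),
      (⨅ p : ℝ, Hi (p', p)) ≤ A p' ∧ (⨅ p : ℝ, Hj (p', p)) ≤ A p')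
    -- argmins and partial inverses
    (ρi ρj : EuclideanSpace ℝ (Fin d) → ℝ)
    (hρi : ∀ p', (∀ q : ℝ, Hi (p', ρi p') ≤ Hi (p', q)) ∧
      ∀ p : ℝ, (∀ q : ℝ, Hi (p', p) ≤ Hi (p', q)) → p = ρi p')
    (hρj : ∀ p', (∀ q : ℝ, Hj (p', ρj p') ≤ Hj (p', q)) ∧
      ∀ p : ℝ, (∀ q : ℝ, Hj (p', p) ≤ Hj (p', q)) → p = ρj p')
    (πip : EuclideanSpace ℝ (Fin d) → ℝ → ℝ)
    (hπip : ∀ (p' : EuclideanSpace ℝ (Fin d)) (lam : ℝ), Hi (p', ρi p') ≤ lam →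
      ρi p' ≤ πip p' lam ∧ Hi (p', πip p' lam) = lam ∧
      ∀ p : ℝ, ρi p' ≤ p → Hi (p', p) = lam → p = πip p' lam)
    (πjm : EuclideanSpace ℝ (Fin d) → ℝ → ℝ)
    (hπjm : ∀ (p' : EuclideanSpace ℝ (Fin d)) (lam : ℝ), Hj (p', ρj p') ≤ lam →
      πjm p' lam ≤ ρj p' ∧ Hj (p', πjm p' lam) = lam ∧
      ∀ p : ℝ, p ≤ ρj p' → Hj (p', p) = lam → p = πjm p' lam)
    -- the two maximisers
    (z' : EuclideanSpace ℝ (Fin d)) (zi zj : ℝ) (hzi : 0 ≤ zi) (hzj : zj ≤ 0)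
    (p' q' : EuclideanSpace ℝ (Fin d)) (pi pj qi qj lam mu : ℝ)
    (hfeasP : Hi (p', pi) = lam ∧ Hj (p', pj) = lam ∧ A p' ≤ lam)
    (hfeasQ : Hi (q', qi) = mu ∧ Hj (q', qj) = mu ∧ A q' ≤ mu)
    (hvals : ⟪p', z'⟫ + pi * zi + pj * zj - lam = ⟪q', z'⟫ + qi * zi + qj * zj - mu)
    (hmax : IsGreatest {v : ℝ | ∃ (r' : EuclideanSpace ℝ (Fin d)) (ri rj nu : ℝ),
        Hi (r', ri) = nu ∧ Hj (r', rj) = nu ∧ A r' ≤ nu ∧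
        v = ⟪r', z'⟫ + ri * zi + rj * zj - nu}
      (⟪p', z'⟫ + pi * zi + pj * zj - lam))
    (ai aj a0 : ℝ) (hai : 0 ≤ ai) (haj : 0 ≤ aj) (ha0 : 0 ≤ a0)
    (hasum : ai + aj + a0 = 1)
    (heqPi : zi = ai * deriv (fun p : ℝ => Hi (p', p)) pi)
    (heqPj : zj = aj * deriv (fun p : ℝ => Hj (p', p)) pj)
    (heqP' : z' = ai • gradient (fun r : EuclideanSpace ℝ (Fin d) => Hi (r, pi)) p'
        + aj • gradient (fun r : EuclideanSpace ℝ (Fin d) => Hj (r, pj)) p'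
        + a0 • gradient A p')
    (bi bj b0 : ℝ) (hbi : 0 ≤ bi) (hbj : 0 ≤ bj) (hb0 : 0 ≤ b0)
    (hbsum : bi + bj + b0 = 1)
    (heqQi : zi = bi * deriv (fun p : ℝ => Hi (q', p)) qi)
    (heqQj : zj = bj * deriv (fun p : ℝ => Hj (q', p)) qj)
    (heqQ' : z' = bi • gradient (fun r : EuclideanSpace ℝ (Fin d) => Hi (r, qi)) q'
        + bj • gradient (fun r : EuclideanSpace ℝ (Fin d) => Hj (r, qj)) q'
        + b0 • gradient A q') :
    lam = mu ∧ p' = q' ∧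
    ((pi = qi ∧ pi = πip p' lam) ∨ (ai = 0 ∧ bi = 0 ∧ zi = 0)) ∧
    ((pj = qj ∧ pj = πjm p' lam) ∨ (aj = 0 ∧ bj = 0 ∧ zj = 0)) ∧
    (⟪p', z'⟫ + pi * zi + pj * zj - lam
      = ⟪p', z'⟫ + πip p' lam * zi + πjm p' lam * zj - lam) ∧
    zi = ai * deriv (fun p : ℝ => Hi (p', p)) (πip p' lam) ∧
    zj = aj * deriv (fun p : ℝ => Hj (p', p)) (πjm p' lam) ∧
    z' = ai • gradient (fun r : EuclideanSpace ℝ (Fin d) => Hi (r, πip p' lam)) p'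
        + aj • gradient (fun r : EuclideanSpace ℝ (Fin d) => Hj (r, πjm p' lam)) p'
        + a0 • gradient A p' :=
  vertex_maximiser_unique_ij_general d Hi Hj hC2i hC2j hposi hposj A hAC2 hApos ρi ρj hρi hρj πip
    hπip πjm hπjm z' zi zj hzi hzj p' q' pi pj qi qj lam mu hfeasP hfeasQ hvals hmax ai aj a0 heqPi
    heqPj heqP' bi bj heqQi heqQj
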